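/- arXiv:1103.5126 — 2 statements merged into one kernel-verified Lean document; each statement's English description precedes it below -/
import Mathlib

section
/- For each positive integer $l$, each $M \ge 0$ and each constant $K$, and for a function $g: \mathbb{C}^l \to \mathbb{C}$ holomorphic on $\{\lambda : \mathrm{Re}\,\lambda_j > -\delta \text{ for all } j\}$ satisfying $|g(\lambda)| \le K\prod_{j=1}^l (1+|\lambda_j|)^M e^{(A-\pi)|\mathrm{Im}\,\lambda_j| + (R - P)\mathrm{Re}\,\lambda_j}$ with $A < \pi$ and $R < P$, the following holds: the limit as $N \to \infty$ of the iterated contour integral of $g$ over the product of rectangles $C_{j,N}$ (each $C_{j,N}$ being the clockwise boundary of the rectangle with vertices $-iN$, $iN$, $iN + (\rho_j + N + 1/2)$, $-iN + (\rho_j + N + 1/2)$) equals the iterated integral of $g$ over $(i\mathbb{R})^l$, i.e. $\lim_{N\to\infty}\oint_{C_{1,N}}\cdots\oint_{C_{l,N}} g(\lambda)\,d\lambda = \int_{i\mathbb{R}}\cdots\int_{i\mathbb{R}} g(\lambda)\,d\lambda$, provided the estimate holds on the union of the contours and on the imaginary axes. -/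
/-!
Both sides vanish. Cauchy's theorem, applied in one variable at a time, kills every iterated
rectangular contour integral, since `g` is holomorphic near the closed rectangles. On the
imaginary axes, integrating out the first variable leaves a function `f` of one variable with
`‖f z‖ ≲ (1 + ‖z‖)^M e^{(A-π)|Im z| + (R-P) Re z}`. Moving its line of integration from
`Re z = 0` to `Re z = c` changes nothing, because the horizontal sides of the rectangles decay
like `e^{(A-π)T}`; and the shifted integral is `O((1 + c)^M e^{(R-P)c})`, which tends to `0`.
-/

open Complex Real MeasureTheory

/-- The (counterclockwise) contour integral of `f` over the boundary of the axis-parallel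
rectangle with lower-left corner `z` and upper-right corner `w`. -/
noncomputable def rectIntegral (f : ℂ → ℂ) (z w : ℂ) : ℂ :=
  (∫ x : ℝ in z.re..w.re, f (x + z.im * Complex.I)) +
    Complex.I * (∫ y : ℝ in z.im..w.im, f (w.re + y * Complex.I)) -
    (∫ x : ℝ in z.re..w.re, f (x + w.im * Complex.I)) -
    Complex.I * (∫ y : ℝ in z.im..w.im, f (z.re + y * Complex.I))

/-- Iterated (counterclockwise) rectangular contour integral of a function of `n` complex
variables, variable `j` running over the boundary of the rectangle with corners `c j`. -/
noncomputable def iterRect : (n : ℕ) → ((Fin n → ℂ) → ℂ) → (Fin n → ℂ × ℂ) → ℂ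
  | 0, g, _ => g (fun i => i.elim0)
  | n + 1, g, c =>
      rectIntegral (fun z => iterRect n (fun v => g (Fin.cons z v)) (fun i => c i.succ))
        (c 0).1 (c 0).2

open Filter Set Topology
open scoped Interval

noncomputable def decayWeight (M s x : ℝ) : ℝ := (1 + |x|) ^ M * Real.exp (s * |x|)

section DecayWeight

variable {s : ℝ}

theorem tendsto_one_add_rpow_mul_exp_atTop (M : ℝ) (hs : s < 0) :
    Tendsto (fun u : ℝ => (1 + u) ^ M * Real.exp (s * u)) atTop (𝓝 0) := by
  have h := ((tendsto_rpow_mul_exp_neg_mul_atTop_nhds_zero M (-s) (neg_pos.2 hs)).comp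
    (tendsto_atTop_add_const_left atTop 1 tendsto_id)).mul_const (Real.exp (-s))
  rw [zero_mul] at h
  refine h.congr fun u => ?_
  simp only [Function.comp_apply, id_eq, mul_assoc, ← Real.exp_add]
  ring_nf

theorem decayWeight_neg (M s x : ℝ) : decayWeight M s (-x) = decayWeight M s x := by
  simp only [decayWeight, abs_neg]

theorem decayWeight_nonneg (M s x : ℝ) : 0 ≤ decayWeight M s x := by
  unfold decayWeight; positivity

theorem continuous_decayWeight (M s : ℝ) : Continuous (decayWeight M s) := by
  unfold decayWeight
  exact ((continuous_const.add continuous_abs).rpow_const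
    fun x => Or.inl (by positivity : 0 < 1 + |x|).ne').mul (by fun_prop)

theorem decayWeight_le {M : ℝ} (hM : 0 ≤ M) (hs : s ≤ 0) {x c : ℝ} (hx : |x| ≤ c) :
    decayWeight M s x ≤ (1 + c) ^ M := by
  have hexp : Real.exp (s * |x|) ≤ 1 :=
    Real.exp_le_one_iff.2 (mul_nonpos_of_nonpos_of_nonneg hs (abs_nonneg x))
  calc decayWeight M s x ≤ (1 + |x|) ^ M * 1 := by
        unfold decayWeight; gcongr
    _ ≤ (1 + c) ^ M := by rw [mul_one]; gcongr

theorem tendsto_decayWeight_cocompact (M : ℝ) (hs : s < 0) :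
    Tendsto (decayWeight M s) (cocompact ℝ) (𝓝 0) :=
  (tendsto_one_add_rpow_mul_exp_atTop M hs).comp tendsto_norm_cocompact_atTop

theorem integrable_decayWeight (M : ℝ) (hs : s < 0) : Integrable (decayWeight M s) := by
  have hbig : decayWeight M s =O[atTop] fun x => Real.exp (s / 2 * x) := by
    have h := ((tendsto_one_add_rpow_mul_exp_atTop M (by linarith : s / 2 < 0)).isBigO_one ℝ).mul
      (Asymptotics.isBigO_refl (fun x => Real.exp (s / 2 * x)) atTop)
    refine h.congr' ?_ (by simp)
    filter_upwards [eventually_ge_atTop 0] with x hx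
    rw [decayWeight, abs_of_nonneg hx, mul_assoc, ← Real.exp_add]
    ring_nf
  refine (continuous_decayWeight M s).locallyIntegrable
    |>.integrable_of_isBigO_atTop_of_norm_isNegInvariant
      (ae_of_all _ fun x => by simp [decayWeight_neg]) hbig
      ⟨Ioi 0, Ioi_mem_atTop 0, ?_⟩
  simpa using exp_neg_integrableOn_Ioi 0 (by linarith : 0 < -(s / 2))

end DecayWeight

theorem one_add_norm_rpow_le {M : ℝ} (hM : 0 ≤ M) (z : ℂ) :
    (1 + ‖z‖) ^ M ≤ (1 + |z.re|) ^ M * (1 + |z.im|) ^ M := by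
  rw [← Real.mul_rpow (by positivity) (by positivity)]
  gcongr
  nlinarith [Complex.norm_le_abs_re_add_abs_im z, abs_nonneg z.re, abs_nonneg z.im]

theorem rpow_mul_exp_le_decayWeight_mul {M a b : ℝ} (hM : 0 ≤ M) {z : ℂ} (hz : 0 ≤ z.re) :
    (1 + ‖z‖) ^ M * Real.exp (a * |z.im| + b * z.re) ≤
      decayWeight M b z.re * decayWeight M a z.im := by
  calc (1 + ‖z‖) ^ M * Real.exp (a * |z.im| + b * z.re)
      ≤ (1 + |z.re|) ^ M * (1 + |z.im|) ^ M * Real.exp (a * |z.im| + b * z.re) := by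
        gcongr; exact one_add_norm_rpow_le hM z
    _ = decayWeight M b z.re * decayWeight M a z.im := by
        rw [decayWeight, decayWeight, abs_of_nonneg hz, Real.exp_add]; ring

section VerticalShift

variable {E : Type*} [NormedAddCommGroup E] [NormedSpace ℂ E]

theorem integral_vertical_eq_of_tendsto_horizontal {f : ℂ → E} {a b : ℝ}
    (hf : DifferentiableOn ℂ f ([[a, b]] ×ℂ univ))
    (ha : Integrable fun t : ℝ => f (a + t * I)) (hb : Integrable fun t : ℝ => f (b + t * I))
    (hhor : Tendsto (fun y : ℝ => ∫ x in a..b, f (x + y * I)) (cocompact ℝ) (𝓝 0)) :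
    ∫ t : ℝ, f (a + t * I) = ∫ t : ℝ, f (b + t * I) := by
  have hrect : ∀ T : ℝ, (∫ x in a..b, f (x + (-T : ℝ) * I)) - (∫ x in a..b, f (x + T * I)) +
      I • (∫ y in -T..T, f (b + y * I)) - I • (∫ y in -T..T, f (a + y * I)) = 0 := fun T =>
    integral_boundary_rect_eq_zero_of_differentiableOn f ⟨a, -T⟩ ⟨b, T⟩
      (hf.mono fun _ hp => ⟨hp.1, trivial⟩)
  have hlim := (((hhor.comp (tendsto_neg_atTop_atBot.mono_right atBot_le_cocompact)).sub
    (hhor.comp (tendsto_id.mono_right atTop_le_cocompact))).add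
    ((intervalIntegral_tendsto_integral hb tendsto_neg_atTop_atBot tendsto_id).const_smul I)).sub
    ((intervalIntegral_tendsto_integral ha tendsto_neg_atTop_atBot tendsto_id).const_smul I)
  have hzero : I • ((∫ t : ℝ, f (b + t * I)) - ∫ t : ℝ, f (a + t * I)) = 0 := by
    have h := tendsto_nhds_unique hlim (tendsto_const_nhds.congr fun T => (hrect T).symm)
    rwa [sub_zero, zero_add, ← smul_sub] at h
  rw [smul_eq_zero, sub_eq_zero] at hzero
  exact (hzero.resolve_left I_ne_zero).symm

theorem tendsto_horizontal_integral_cocompact {f : ℂ → E} {M a b C c : ℝ} (hM : 0 ≤ M)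
    (ha : a < 0) (hb : b ≤ 0) (hC : 0 ≤ C) (hc : 0 ≤ c)
    (hf : ∀ x y : ℝ, 0 ≤ x → ‖f (x + y * I)‖ ≤ C * decayWeight M b x * decayWeight M a y) :
    Tendsto (fun y : ℝ => ∫ x in (0 : ℝ)..c, f (x + y * I)) (cocompact ℝ) (𝓝 0) := by
  refine squeeze_zero_norm (fun y => ?_)
    (by simpa using (tendsto_decayWeight_cocompact M ha).const_mul (C * (1 + c) ^ M * c))
  calc ‖∫ x in (0 : ℝ)..c, f (x + y * I)‖
      ≤ C * (1 + c) ^ M * decayWeight M a y * |c - 0| := by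
        refine intervalIntegral.norm_integral_le_of_norm_le_const fun x hx => ?_
        rw [uIoc_of_le hc] at hx
        refine (hf x y hx.1.le).trans (mul_le_mul_of_nonneg_right ?_ (decayWeight_nonneg ..))
        exact mul_le_mul_of_nonneg_left
          (decayWeight_le hM hb ((abs_of_pos hx.1).trans_le hx.2)) hC
    _ = C * (1 + c) ^ M * c * decayWeight M a y := by rw [sub_zero, abs_of_nonneg hc]; ring

theorem integral_imaginary_axis_eq_zero {f : ℂ → E} {M a b C : ℝ} (hM : 0 ≤ M) (ha : a < 0)
    (hb : b < 0) (hf : DifferentiableOn ℂ f {z | 0 ≤ z.re})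
    (hbound : ∀ z : ℂ, 0 ≤ z.re →
      ‖f z‖ ≤ C * ((1 + ‖z‖) ^ M * Real.exp (a * |z.im| + b * z.re))) :
    ∫ t : ℝ, f (t * I) = 0 := by
  have hC : 0 ≤ C := by simpa using (norm_nonneg _).trans (hbound 0 le_rfl)
  have hdom : ∀ z : ℂ, 0 ≤ z.re → ‖f z‖ ≤ C * (decayWeight M b z.re * decayWeight M a z.im) :=
    fun z hz => (hbound z hz).trans
      (mul_le_mul_of_nonneg_left (rpow_mul_exp_le_decayWeight_mul hM hz) hC)
  have hline : ∀ c t : ℝ, 0 ≤ c →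
      ‖f (c + t * I)‖ ≤ C * decayWeight M b c * decayWeight M a t := fun c t hc => by
    simpa [mul_assoc] using hdom (c + t * I) (by simpa using hc)
  have hint : ∀ c : ℝ, 0 ≤ c → Integrable fun t : ℝ => f (c + t * I) := fun c hc =>
    ((integrable_decayWeight M ha).const_mul (C * decayWeight M b c)).mono'
      (hf.continuousOn.comp_continuous (by fun_prop) fun t => by
        simpa using hc).aestronglyMeasurable
      (ae_of_all _ fun t => hline c t hc)
  have hshift : ∀ c : ℝ, 0 ≤ c → ∫ t : ℝ, f (c + t * I) = ∫ t : ℝ, f (t * I) := by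
    intro c hc
    have h := integral_vertical_eq_of_tendsto_horizontal
      (hf.mono fun z hz => by rw [mem_reProdIm, uIcc_of_le hc] at hz; exact hz.1.1)
      (hint 0 le_rfl) (hint c hc) (tendsto_horizontal_integral_cocompact hM ha hb.le hC hc hline)
    simpa using h.symm
  have hdecay : Tendsto (fun c : ℝ => ∫ t : ℝ, f (c + t * I)) atTop (𝓝 0) := by
    have hmajorant := (((tendsto_decayWeight_cocompact M hb).mono_left
      atTop_le_cocompact).const_mul C).mul_const (∫ t, decayWeight M a t)
    rw [mul_zero, zero_mul] at hmajorant
    refine squeeze_zero_norm' ?_ hmajorant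
    filter_upwards [eventually_ge_atTop 0] with c hc
    rw [← integral_const_mul]
    exact norm_integral_le_of_norm_le ((integrable_decayWeight M ha).const_mul _)
      (ae_of_all _ fun t => hline c t hc)
  exact tendsto_nhds_unique (tendsto_const_nhds.congr' <|
    (eventually_ge_atTop 0).mono fun c hc => (hshift c hc).symm) hdecay

theorem integral_eq_zero_of_forall_integral_cons_eq_zero {α F : Type*} [MeasureSpace α]
    [SigmaFinite (volume : Measure α)] [NormedAddCommGroup F] [NormedSpace ℝ F] {n : ℕ}
    {G : (Fin (n + 1) → α) → F} (h : ∀ v : Fin n → α, ∫ x, G (Fin.cons x v) = 0) :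
    ∫ y, G y = 0 := by
  by_cases hG : Integrable G
  · set e := MeasurableEquiv.piFinSuccAbove (fun _ : Fin (n + 1) => α) 0
    have he := (volume_preserving_piFinSuccAbove (fun _ : Fin (n + 1) => α) 0).symm
    rw [← he.integral_comp', Measure.volume_eq_prod, integral_prod_symm (fun p => G (e.symm p))
      ((he.integrable_comp_emb (MeasurableEquiv.measurableEmbedding _)).2 hG)]
    simpa [e, MeasurableEquiv.piFinSuccAbove_symm_apply, Fin.insertNthEquiv_zero, Fin.consEquiv]
      using integral_eq_zero_of_ae (ae_of_all _ h)
  · exact integral_undef hG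

theorem integral_imaginary_axes_eq_zero {n : ℕ} {M a b K : ℝ} (hM : 0 ≤ M) (ha : a < 0)
    (hb : b < 0) {g : (Fin (n + 1) → ℂ) → E}
    (hg : DifferentiableOn ℂ g {lam | ∀ j, 0 ≤ (lam j).re})
    (hbound : ∀ lam : Fin (n + 1) → ℂ, (∀ j, 0 ≤ (lam j).re) →
      ‖g lam‖ ≤ K * ∏ j, (1 + ‖lam j‖) ^ M * Real.exp (a * |(lam j).im| + b * (lam j).re)) :
    ∫ y : Fin (n + 1) → ℝ, g (fun j => (y j : ℂ) * I) = 0 := by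
  refine integral_eq_zero_of_forall_integral_cons_eq_zero fun v => ?_
  set w : Fin n → ℂ := fun j => (v j : ℂ) * I
  have hcons : ∀ z : ℂ, 0 ≤ z.re → ∀ j, 0 ≤ ((Fin.cons z w : Fin (n + 1) → ℂ) j).re :=
    fun z hz => Fin.forall_fin_succ.2 ⟨hz, fun j => by simp [w]⟩
  have hcomp : ∀ x : ℝ, (fun j => ((Fin.cons x v : Fin (n + 1) → ℝ) j : ℂ) * I) =
      Fin.cons ((x : ℂ) * I) w := fun x => by
    ext j; refine Fin.cases ?_ (fun j => ?_) j <;> simp [w]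
  simp only [hcomp]
  have hdiff : Differentiable ℂ fun z : ℂ => (Fin.cons z w : Fin (n + 1) → ℂ) := by fun_prop
  refine integral_imaginary_axis_eq_zero (f := fun z => g (Fin.cons z w))
    (C := K * ∏ j, (1 + ‖w j‖) ^ M * Real.exp (a * |(w j).im| + b * (w j).re)) hM ha hb
    (hg.comp hdiff.differentiableOn hcons) fun z hz => ?_
  have h := hbound _ (hcons z hz)
  rw [Fin.prod_univ_succ] at h
  simp only [Fin.cons_zero, Fin.cons_succ] at h
  linarith

end VerticalShift

theorem rectIntegral_eq_zero_of_differentiableOn {f : ℂ → ℂ} {z w : ℂ}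
    (hf : DifferentiableOn ℂ f (Rectangle z w)) : rectIntegral f z w = 0 := by
  have h := integral_boundary_rect_eq_zero_of_differentiableOn f z w hf
  rw [smul_eq_mul, smul_eq_mul] at h
  rw [rectIntegral]
  linear_combination h

theorem iterRect_eq_zero_of_differentiableOn :
    ∀ {n : ℕ} {g : (Fin (n + 1) → ℂ) → ℂ} {c : Fin (n + 1) → ℂ × ℂ},
      DifferentiableOn ℂ g (univ.pi fun j => Rectangle (c j).1 (c j).2) →
      iterRect (n + 1) g c = 0
  | 0, g, c, hg => rectIntegral_eq_zero_of_differentiableOn <|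
      hg.comp (by fun_prop) fun z hz => by simpa [Fin.forall_fin_succ] using hz
  | n + 1, g, c, hg => rectIntegral_eq_zero_of_differentiableOn <|
      (differentiableOn_const 0).congr fun z hz => iterRect_eq_zero_of_differentiableOn <|
        hg.comp (by fun_prop) fun v hv => by
          simp only [mem_univ_pi, Fin.forall_fin_succ, Fin.cons_zero, Fin.cons_succ] at hv ⊢
          exact ⟨hz, hv⟩

/-- Contour-shifting limit in the proof of Theorem 2.1 of Ólafsson–Pasquale: for `g`
holomorphic on `{λ : Re λ_j > -δ}` with the Hardy-type bound
`|g(λ)| ≤ K ∏_j (1+|λ_j|)^M e^{(A-π)|Im λ_j| + (R-P)Re λ_j}` (with `A < π`, `R < P`) on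
the closed right half-planes (covering all the contours and the imaginary axes), the
iterated clockwise integrals over the rectangles `C_{j,N}` (vertices `-iN`, `iN`,
`iN + (ρ_j+N+1/2)`, `-iN + (ρ_j+N+1/2)`) converge, as `N → ∞`, to the iterated integral
of `g` over `(iℝ)^l` (each axis oriented upwards, contributing a factor `i`). -/
theorem contour_shift_limit
    (l : ℕ) (hl : 0 < l) (M A R P δ K : ℝ) (hM : 0 ≤ M) (hA : A < Real.pi)
    (hRP : R < P) (hδ : 0 < δ)
    (ρ : Fin l → ℝ) (hρ : ∀ j, 0 < ρ j)
    (g : (Fin l → ℂ) → ℂ)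
    (hg : DifferentiableOn ℂ g {lam : Fin l → ℂ | ∀ j, -δ < (lam j).re})
    (hbound : ∀ lam : Fin l → ℂ, (∀ j, 0 ≤ (lam j).re) →
      ‖g lam‖ ≤ K * ∏ j, (1 + ‖lam j‖) ^ M *
        Real.exp ((A - Real.pi) * |(lam j).im| + (R - P) * (lam j).re)) :
    Filter.Tendsto
      (fun N : ℕ => (-1 : ℂ) ^ l *
        iterRect l g (fun j =>
          (-(N : ℂ) * Complex.I, ((ρ j + N + 1 / 2 : ℝ) : ℂ) + (N : ℂ) * Complex.I)))
      Filter.atTop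
      (nhds (Complex.I ^ l * ∫ y : Fin l → ℝ, g (fun j => (y j : ℂ) * Complex.I))) := by
  obtain ⟨k, rfl⟩ : ∃ k, l = k + 1 := ⟨l - 1, by omega⟩
  have hcontour : ∀ N : ℕ, iterRect (k + 1) g (fun j =>
      (-(N : ℂ) * I, ((ρ j + N + 1 / 2 : ℝ) : ℂ) + (N : ℂ) * I)) = 0 := fun N =>
    iterRect_eq_zero_of_differentiableOn <| hg.mono fun lam hlam j => by
      have hre : (lam j).re ∈ [[(-(N : ℂ) * I).re, (((ρ j + N + 1 / 2 : ℝ) : ℂ) + N * I).re]] :=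
        (mem_univ_pi.1 hlam j).1
      rw [show (-(N : ℂ) * I).re = 0 by simp,
        show (((ρ j + N + 1 / 2 : ℝ) : ℂ) + N * I).re = ρ j + N + 1 / 2 by simp] at hre
      have hN : (0 : ℝ) ≤ ρ j + N + 1 / 2 := by linarith [hρ j, N.cast_nonneg (α := ℝ)]
      linarith [(le_inf le_rfl hN).trans hre.1]
  have haxes := integral_imaginary_axes_eq_zero hM (sub_neg.2 hA) (sub_neg.2 hRP)
    (hg.mono fun lam (h : ∀ j, 0 ≤ (lam j).re) j => by linarith [h j]) hbound
  simp only [hcontour, haxes, mul_zero]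
  exact tendsto_const_nhds
end

section
/- Let $V' \subseteq \mathbb{C}^n$ be an open set and $H: V' \to \mathbb{C}$ holomorphic with $|H(\lambda)| \le C(1+\|\lambda\|)^s e^{R\|\mathrm{Im}\,\lambda\|}$ for all $\lambda \in V'$, where $C > 0$, $s > 0$, $R \in \mathbb{R}$. Let $\tau > 0$ and let $V$ be an open set such that the closed $\tau$-neighborhood $V_\tau = \{\nu : \exists \lambda \in V,\ \|\lambda - \nu\| \le \tau\}$ is contained in $V'$. Let $p$ be a polynomial such that $F = H/p$ extends holomorphically to $V'$. Then there is a constant $C_\tau > 0$ (depending on $C, R, s, \tau, p$) such that $|F(\lambda)| \le C_\tau(1+\|\lambda\|)^s e^{R\|\mathrm{Im}\,\lambda\|}$ for all $\lambda \in V$. -/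
open Complex MeasureTheory

/-!
Restrict to the complex lines `z ↦ λ + z • w`, where `w` is a point at which the top homogeneous
part of `p` does not vanish: then `z ↦ p (λ + z • w)` is a polynomial of degree `deg p` whose
leading coefficient does not depend on `λ`. For a polynomial `q` in one variable, replacing each
factor `z - a` by `r - conj a * z / r`, which has the same modulus on `|z| = r` and equals `r` at
`0`, and applying the maximum modulus principle gives
`|g 0| * |lead q| * r ^ deg q ≤ max_{|z| = r} |g z * q z|`.
For `r = τ / (1 + ‖w‖)` these circles stay in the `τ`-neighbourhood of `V`, on which the weight
`(1 + ‖λ‖) ^ s * exp (R * ‖Im λ‖)` changes at most by the factor `(1 + τ) ^ s * exp (|R| * τ)`.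
-/

open Metric ComplexConjugate

open Polynomial in
theorem Polynomial.coeff_prod_sum_of_natDegree_le {R ι : Type*} [CommSemiring R] (s : Finset ι)
    (f : ι → R[X]) (d : ι → ℕ) (h : ∀ i ∈ s, (f i).natDegree ≤ d i) :
    (∏ i ∈ s, f i).coeff (∑ i ∈ s, d i) = ∏ i ∈ s, (f i).coeff (d i) := by
  classical
  induction s using Finset.induction with
  | empty => simp
  | insert a s ha ih =>
    simp only [Finset.forall_mem_insert] at h
    rw [Finset.prod_insert ha, Finset.sum_insert ha, Finset.prod_insert ha,
      coeff_mul_add_eq_of_natDegree_le h.1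
        ((natDegree_prod_le s f).trans (Finset.sum_le_sum h.2)), ih h.2]

namespace MvPolynomial

open Polynomial (natDegree_prod_le natDegree_pow_le)

variable {R σ : Type*} [CommSemiring R] {f : σ → Polynomial R}

theorem natDegree_aeval_monomial_le (hf : ∀ i, (f i).natDegree ≤ 1) (u : σ →₀ ℕ) (a : R) :
    (aeval f (monomial u a)).natDegree ≤ u.degree := by
  rw [aeval_monomial, Polynomial.algebraMap_eq, Finsupp.prod, Finsupp.degree_apply]
  refine (Polynomial.natDegree_C_mul_le _ _).trans <| (natDegree_prod_le _ _).trans <|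
    Finset.sum_le_sum fun i _ => natDegree_pow_le.trans ?_
  simpa using Nat.mul_le_mul_left (u i) (hf i)

theorem coeff_aeval_monomial_degree (hf : ∀ i, (f i).natDegree ≤ 1) (u : σ →₀ ℕ) (a : R) :
    (aeval f (monomial u a)).coeff u.degree = eval (fun i => (f i).coeff 1) (monomial u a) := by
  rw [aeval_monomial, Polynomial.algebraMap_eq, Polynomial.coeff_C_mul, eval_monomial,
    Finsupp.prod, Finsupp.prod, Finsupp.degree_apply,
    Polynomial.coeff_prod_sum_of_natDegree_le _ _ _ fun i _ => natDegree_pow_le.trans ?_]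
  · congr 1
    refine Finset.prod_congr rfl fun i _ => ?_
    simpa using Polynomial.coeff_pow_of_natDegree_le (hf i) (m := u i)
  · simpa using Nat.mul_le_mul_left (u i) (hf i)

theorem IsHomogeneous.natDegree_aeval_le {φ : MvPolynomial σ R} {k : ℕ} (hφ : φ.IsHomogeneous k)
    (hf : ∀ i, (f i).natDegree ≤ 1) : (MvPolynomial.aeval f φ).natDegree ≤ k := by
  conv_lhs => rw [φ.as_sum, map_sum]
  refine Polynomial.natDegree_sum_le_of_forall_le _ _ fun u hu => ?_
  exact (natDegree_aeval_monomial_le hf u _).trans (hφ.degree_eq_sum_deg_support hu).ge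

theorem IsHomogeneous.coeff_aeval {φ : MvPolynomial σ R} {k : ℕ} (hφ : φ.IsHomogeneous k)
    (hf : ∀ i, (f i).natDegree ≤ 1) :
    (MvPolynomial.aeval f φ).coeff k = eval (fun i => (f i).coeff 1) φ := by
  conv_lhs => rw [φ.as_sum, map_sum]
  conv_rhs => rw [φ.as_sum, map_sum]
  rw [Polynomial.finsetSum_coeff]
  refine Finset.sum_congr rfl fun u hu => ?_
  rw [← coeff_aeval_monomial_degree hf, Finsupp.degree_apply, ← hφ.degree_eq_sum_deg_support hu]

theorem natDegree_aeval_le_totalDegree (hf : ∀ i, (f i).natDegree ≤ 1) (p : MvPolynomial σ R) :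
    (aeval f p).natDegree ≤ p.totalDegree := by
  nth_rw 1 [← sum_homogeneousComponent p]
  rw [map_sum]
  refine Polynomial.natDegree_sum_le_of_forall_le _ _ fun k hk => ?_
  exact ((homogeneousComponent_isHomogeneous k p).natDegree_aeval_le hf).trans
    (Nat.lt_succ_iff.mp (Finset.mem_range.mp hk))

theorem coeff_aeval_totalDegree (hf : ∀ i, (f i).natDegree ≤ 1) (p : MvPolynomial σ R) :
    (aeval f p).coeff p.totalDegree =
      eval (fun i => (f i).coeff 1) (homogeneousComponent p.totalDegree p) := by
  nth_rw 1 [← sum_homogeneousComponent p]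
  rw [map_sum, Polynomial.finsetSum_coeff, Finset.sum_range_succ, Finset.sum_eq_zero, zero_add,
    (homogeneousComponent_isHomogeneous _ p).coeff_aeval hf]
  intro k hk
  exact Polynomial.coeff_eq_zero_of_natDegree_lt <|
    ((homogeneousComponent_isHomogeneous k p).natDegree_aeval_le hf).trans_lt
      (Finset.mem_range.mp hk)

theorem homogeneousComponent_totalDegree_ne_zero {p : MvPolynomial σ R} (hp : p ≠ 0) :
    homogeneousComponent p.totalDegree p ≠ 0 := by
  obtain ⟨u, hu, hdeg⟩ := Finset.exists_mem_eq_sup p.support (support_nonempty.mpr hp)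
    Finsupp.degree
  have hu_deg : u.degree = p.totalDegree := hdeg.symm
  intro h
  have := coeff_homogeneousComponent p.totalDegree p u
  rw [h, coeff_zero, if_pos hu_deg] at this
  exact mem_support_iff.mp hu this.symm

end MvPolynomial

theorem Complex.norm_apply_zero_mul_pow_card_le {r M : ℝ} (hr : 0 < r) (s : Multiset ℂ)
    {g : ℂ → ℂ} (hg : DifferentiableOn ℂ g (closedBall 0 r))
    (hM : ∀ z ∈ sphere (0 : ℂ) r, ‖g z * (s.map fun a => z - a).prod‖ ≤ M) :
    ‖g 0‖ * r ^ Multiset.card s ≤ M := by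
  induction s using Multiset.induction_on generalizing g with
  | empty =>
    simp only [Multiset.map_zero, Multiset.prod_zero, mul_one, Multiset.card_zero, pow_zero]
      at hM ⊢
    refine norm_le_of_forall_mem_frontier_norm_le isBounded_ball (hg.diffContOnCl_ball le_rfl)
      ?_ (subset_closure (mem_ball_self hr))
    rwa [frontier_ball 0 hr.ne']
  | cons a s ih =>
    have hfactor : ∀ z ∈ sphere (0 : ℂ) r, ‖(r : ℂ) - conj a * z / r‖ = ‖z - a‖ := by
      intro z hz
      rw [mem_sphere_zero_iff_norm] at hz
      have hzz : z * conj z = (r : ℂ) ^ 2 := by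
        rw [mul_conj, normSq_eq_norm_sq, hz]; push_cast; rfl
      have : (r : ℂ) - conj a * z / r = z * conj (z - a) / r := by
        rw [map_sub, mul_sub, hzz]; field_simp
      rw [this, norm_div, norm_mul, RCLike.norm_conj, hz, Complex.norm_of_nonneg hr.le]
      field_simp
    have := ih (g := fun z => g z * ((r : ℂ) - conj a * z / r)) (hg.mul (by fun_prop))
      fun z hz => by
        specialize hM z hz
        rwa [Multiset.map_cons, Multiset.prod_cons, ← mul_assoc, norm_mul, norm_mul,
          ← hfactor z hz, ← norm_mul, ← norm_mul] at hM
    simp only [norm_mul, mul_zero, zero_div, sub_zero, norm_real, Real.norm_of_nonneg hr.le]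
      at this
    rwa [Multiset.card_cons, pow_succ, mul_comm (r ^ _), ← mul_assoc]

theorem Complex.norm_apply_zero_mul_leadingCoeff_mul_pow_le {r M : ℝ} (hr : 0 < r) {g : ℂ → ℂ}
    (hg : DifferentiableOn ℂ g (closedBall 0 r)) (q : Polynomial ℂ)
    (hM : ∀ z ∈ sphere (0 : ℂ) r, ‖g z * q.eval z‖ ≤ M) :
    ‖g 0‖ * ‖q.leadingCoeff‖ * r ^ q.natDegree ≤ M := by
  have hq : ∀ z, q.eval z = q.leadingCoeff * (q.roots.map fun a => z - a).prod := by
    intro z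
    conv_lhs => rw [← Polynomial.C_leadingCoeff_mul_prod_multiset_X_sub_C
      (p := q) IsAlgClosed.card_roots_eq_natDegree]
    simp [Polynomial.eval_multiset_prod, Multiset.map_map]
  have := Complex.norm_apply_zero_mul_pow_card_le hr q.roots (g := fun z => g z * q.leadingCoeff)
    (hg.mul_const _) fun z hz => by simpa only [hq, mul_assoc] using hM z hz
  rwa [IsAlgClosed.card_roots_eq_natDegree, norm_mul] at this

theorem MvPolynomial.exists_norm_apply_zero_mul_pow_totalDegree_le {σ : Type*}
    (p : MvPolynomial σ ℂ) (hp : p ≠ 0) :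
    ∃ w : σ → ℂ, ∃ c > 0, ∀ (x : σ → ℂ) {g : ℂ → ℂ} {r M : ℝ}, 0 < r →
      DifferentiableOn ℂ g (closedBall 0 r) →
      (∀ z ∈ sphere (0 : ℂ) r, ‖g z * eval (x + z • w) p‖ ≤ M) →
      ‖g 0‖ * c * r ^ p.totalDegree ≤ M := by
  obtain ⟨w, hw⟩ : ∃ w, eval w (homogeneousComponent p.totalDegree p) ≠ 0 := by
    by_contra! h
    exact homogeneousComponent_totalDegree_ne_zero hp (funext fun w => by simp [h w])
  refine ⟨w, _, norm_pos_iff.mpr hw, fun x g r M hr hg hM => ?_⟩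
  set f : σ → Polynomial ℂ := fun i => .C (w i) * .X + .C (x i)
  have hf : ∀ i, (f i).natDegree ≤ 1 := fun i => Polynomial.natDegree_linear_le
  have hcoeff :
      (aeval f p).coeff p.totalDegree = eval w (homogeneousComponent p.totalDegree p) := by
    rw [coeff_aeval_totalDegree hf]
    congr
    funext i
    simp [f]
  have hdeg : (aeval f p).natDegree = p.totalDegree :=
    (natDegree_aeval_le_totalDegree hf p).antisymm
      (Polynomial.le_natDegree_of_ne_zero (hcoeff ▸ hw))
  have heval : ∀ z, (aeval f p).eval z = eval (x + z • w) p := by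
    intro z
    rw [← Polynomial.coe_aeval_eq_eval, ← AlgHom.comp_apply, comp_aeval, aeval_eq_eval]
    congr
    funext i
    simp only [f, Polynomial.coe_aeval_eq_eval, Polynomial.eval_add, Polynomial.eval_mul,
      Polynomial.eval_C, Polynomial.eval_X, Pi.add_apply, Pi.smul_apply, smul_eq_mul]
    ring
  have := Complex.norm_apply_zero_mul_leadingCoeff_mul_pow_le hr hg (aeval f p)
    fun z hz => heval z ▸ hM z hz
  rwa [Polynomial.leadingCoeff, hdeg, hcoeff] at this

theorem one_add_norm_rpow_le_of_norm_sub_le {E : Type*} [SeminormedAddCommGroup E] {s τ : ℝ}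
    (hs : 0 ≤ s) {x y : E} (h : ‖x - y‖ ≤ τ) : (1 + ‖x‖) ^ s ≤ (1 + τ) ^ s * (1 + ‖y‖) ^ s := by
  have hτ : 0 ≤ τ := (norm_nonneg _).trans h
  rw [← Real.mul_rpow (by positivity) (by positivity)]
  refine Real.rpow_le_rpow (by positivity) ?_ hs
  nlinarith [norm_le_norm_add_norm_sub' x y, norm_nonneg y]

theorem pi_norm_im_le_norm {ι : Type*} [Fintype ι] (v : ι → ℂ) : ‖fun j => (v j).im‖ ≤ ‖v‖ :=
  (pi_norm_le_iff_of_nonneg (norm_nonneg v)).mpr fun j =>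
    (Real.norm_eq_abs _ ▸ abs_im_le_norm (v j)).trans (norm_le_pi_norm v j)

theorem exp_mul_norm_im_le_of_norm_sub_le {ι : Type*} [Fintype ι] (R : ℝ) {τ : ℝ} {x y : ι → ℂ}
    (h : ‖x - y‖ ≤ τ) :
    Real.exp (R * ‖fun j => (x j).im‖) ≤
      Real.exp (|R| * τ) * Real.exp (R * ‖fun j => (y j).im‖) := by
  rw [← Real.exp_add, Real.exp_le_exp]
  have him : |‖fun j => (x j).im‖ - ‖fun j => (y j).im‖| ≤ τ := by
    exact (abs_norm_sub_norm_le _ _).trans ((pi_norm_im_le_norm (x - y)).trans h)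
  have := (le_abs_self _).trans (abs_mul R _ ▸ mul_le_mul_of_nonneg_left him (abs_nonneg R))
  linarith

theorem one_add_norm_rpow_mul_exp_le_of_norm_sub_le {ι : Type*} [Fintype ι] {s : ℝ} (hs : 0 ≤ s)
    (R : ℝ) {τ : ℝ} {x y : ι → ℂ} (h : ‖x - y‖ ≤ τ) :
    (1 + ‖x‖) ^ s * Real.exp (R * ‖fun j => (x j).im‖) ≤
      (1 + τ) ^ s * Real.exp (|R| * τ) *
        ((1 + ‖y‖) ^ s * Real.exp (R * ‖fun j => (y j).im‖)) := by
  calc _ ≤ (1 + τ) ^ s * (1 + ‖y‖) ^ s *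
        (Real.exp (|R| * τ) * Real.exp (R * ‖fun j => (y j).im‖)) := by
        have hpow := one_add_norm_rpow_le_of_norm_sub_le hs h
        exact mul_le_mul hpow (exp_mul_norm_im_le_of_norm_sub_le R h) (by positivity)
          ((by positivity : (0 : ℝ) ≤ (1 + ‖x‖) ^ s).trans hpow)
    _ = _ := by ring

theorem malgrange_division_estimate_general
    (n : ℕ) (V' V : Set (Fin n → ℂ))
    (H : (Fin n → ℂ) → ℂ)
    (C s R τ : ℝ) (hC : 0 < C) (hs : 0 < s) (hτ : 0 < τ)
    (hHbound : ∀ lam ∈ V', ‖H lam‖ ≤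
      C * (1 + ‖lam‖) ^ s * Real.exp (R * ‖(fun j => (lam j).im : Fin n → ℝ)‖))
    (hVτ : {ν : Fin n → ℂ | ∃ lam ∈ V, ‖lam - ν‖ ≤ τ} ⊆ V')
    (p : MvPolynomial (Fin n) ℂ) (hp : p ≠ 0)
    (F : (Fin n → ℂ) → ℂ) (hF : DifferentiableOn ℂ F V')
    (hFp : ∀ lam ∈ V', F lam * MvPolynomial.eval lam p = H lam) :
    ∃ Cτ > 0, ∀ lam ∈ V, ‖F lam‖ ≤
      Cτ * (1 + ‖lam‖) ^ s * Real.exp (R * ‖(fun j => (lam j).im : Fin n → ℝ)‖) := by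
  obtain ⟨w, c, hc, hdiv⟩ := p.exists_norm_apply_zero_mul_pow_totalDegree_le hp
  set r := τ / (1 + ‖w‖)
  have hr : 0 < r := by positivity
  set K := (1 + τ) ^ s * Real.exp (|R| * τ)
  refine ⟨C * K / (c * r ^ p.totalDegree), by positivity, fun lam hlam => ?_⟩
  have hdist : ∀ z ∈ closedBall (0 : ℂ) r, ‖lam + z • w - lam‖ ≤ τ := fun z hz => by
    rw [add_sub_cancel_left, norm_smul]
    calc ‖z‖ * ‖w‖ ≤ r * (1 + ‖w‖) := by gcongr; exacts [mem_closedBall_zero_iff.mp hz, by simp]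
      _ = τ := div_mul_cancel₀ τ (by positivity)
  have hmem : ∀ z ∈ closedBall (0 : ℂ) r, lam + z • w ∈ V' := fun z hz =>
    hVτ ⟨lam, hlam, by rw [norm_sub_rev]; exact hdist z hz⟩
  have key := hdiv lam (g := fun z => F (lam + z • w)) hr (hF.comp (by fun_prop) hmem)
    (M := C * (K * ((1 + ‖lam‖) ^ s * Real.exp (R * ‖fun j => (lam j).im‖)))) fun z hz => by
      have hz := sphere_subset_closedBall hz
      rw [hFp _ (hmem z hz)]
      exact ((hHbound _ (hmem z hz)).trans_eq (mul_assoc _ _ _)).trans <|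
        mul_le_mul_of_nonneg_left
          (one_add_norm_rpow_mul_exp_le_of_norm_sub_le hs.le R (hdist z hz)) hC.le
  simp only [zero_smul, add_zero] at key
  rw [div_mul_eq_mul_div, div_mul_eq_mul_div, le_div_iff₀ (by positivity)]
  linarith

/-- Lemma 5.4 of Ólafsson–Pasquale (local Malgrange argument): if `H` is holomorphic on
`V' ⊆ ℂⁿ` with `|H(λ)| ≤ C(1+‖λ‖)^s e^{R‖Im λ‖}`, `V` is a set whose closed
`τ`-neighborhood is contained in `V'`, and `p` is a nonzero polynomial such that
`F = H/p` extends holomorphically to `V'`, then `F` satisfies the same type of bound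
on `V` with a constant `C_τ`. -/
theorem malgrange_division_estimate
    (n : ℕ) (V' V : Set (Fin n → ℂ)) (hV' : IsOpen V') (hV : IsOpen V)
    (H : (Fin n → ℂ) → ℂ) (hH : DifferentiableOn ℂ H V')
    (C s R τ : ℝ) (hC : 0 < C) (hs : 0 < s) (hτ : 0 < τ)
    (hHbound : ∀ lam ∈ V', ‖H lam‖ ≤
      C * (1 + ‖lam‖) ^ s * Real.exp (R * ‖(fun j => (lam j).im : Fin n → ℝ)‖))
    (hVτ : {ν : Fin n → ℂ | ∃ lam ∈ V, ‖lam - ν‖ ≤ τ} ⊆ V')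
    (p : MvPolynomial (Fin n) ℂ) (hp : p ≠ 0)
    (F : (Fin n → ℂ) → ℂ) (hF : DifferentiableOn ℂ F V')
    (hFp : ∀ lam ∈ V', F lam * MvPolynomial.eval lam p = H lam) :
    ∃ Cτ > 0, ∀ lam ∈ V, ‖F lam‖ ≤
      Cτ * (1 + ‖lam‖) ^ s * Real.exp (R * ‖(fun j => (lam j).im : Fin n → ℝ)‖) :=
  malgrange_division_estimate_general n V' V H C s R τ hC hs hτ hHbound hVτ p hp F hF hFp
end
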